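/- For n ∈ ω define g_n: N_{t_n 0} → N_{t_n 1} ⊆ 2^ω by g_n(α)(k) = 1 if k = 2^{q_n}, and g_n(α)(k) = α(θ_n(k)) otherwise (where θ_n(k) = k if k ∉ S_n and θ_n(2^{q_n}·j) = 2^{q_n}·(2j+1), the L = 1 case). If m < n and α ∈ N_{t_n 0} is such that g_n(α) ∈ N_{t_m 0} and α ∈ N_{t_m 0}, then g_m(g_n(α)) = g_m(α). -/

import Mathlib

/-- `q 0 = 0`, `q (n+1) = 3·2^(q n)` -/
def q : ℕ → ℕ
  | 0 => 0
  | n + 1 => 3 * 2 ^ q n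

/-- The case `L = 1`: `θ_n(k) = k` if `k ∉ S_n` and `θ_n(2^(q n)·j) = 2^(q n)·(2j+1)`. -/
def thetaN1 (n k : ℕ) : ℕ :=
  if 2 ^ q n ∣ k ∧ k ≠ 0 then 2 ^ q n * (2 * (k / 2 ^ q n) + 1) else k

/-- `t n`, as a function: `ψ(n)` (the `n`-th binary sequence in the
length-lexicographic enumeration, realized as the binary digits of `n+1`
after the leading 1) followed by zeros; `t n` has length `2^(q n)`. -/
def tFun (n i : ℕ) : Bool :=
  if i < Nat.log2 (n + 1) then (n + 1).testBit (Nat.log2 (n + 1) - 1 - i) else false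

/-- `g_n(α)(k) = 1` if `k = 2^(q n)`, and `g_n(α)(k) = α(θ_n(k))` otherwise. -/
def gB (n : ℕ) (α : ℕ → Bool) : ℕ → Bool :=
  fun k => if k = 2 ^ q n then true else α (thetaN1 n k)

/-- `α ∈ N_{t_n ε}`: `α` extends `t n` (of length `2^(q n)`) followed by the bit `b`. -/
def inN (n : ℕ) (b : Bool) (α : ℕ → Bool) : Prop :=
  (∀ i, i < 2 ^ q n → α i = tFun n i) ∧ α (2 ^ q n) = b

/-! `g_n α` agrees with `α` at every coordinate outside `S_n ∪ {2 ^ q n}`, and for `m < n` the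
map `θ_m` never lands in `S_n`: points of `S_m` go to odd multiples of `2 ^ q m`, which
`2 ^ q n` cannot divide, and all other points are fixed and lie outside `S_n ⊆ S_m`. So `g_n`
leaves untouched every coordinate that `g_m` reads. -/

theorem q_strictMono : StrictMono q :=
  strictMono_nat_of_lt_succ fun n => by
    have := Nat.lt_two_pow_self (n := q n)
    change q n < 3 * 2 ^ q n
    omega

theorem gB_apply_of_not_mem {n k : ℕ} (α : ℕ → Bool) (hk : ¬ (2 ^ q n ∣ k ∧ k ≠ 0)) :
    gB n α k = α k := by
  have hne : k ≠ 2 ^ q n := by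
    rintro rfl
    exact hk ⟨dvd_rfl, by positivity⟩
  simp only [gB, thetaN1, if_neg hne, if_neg hk]

theorem not_pow_succ_dvd_pow_mul_odd (a c : ℕ) : ¬ 2 ^ (a + 1) ∣ 2 ^ a * (2 * c + 1) := by
  rw [pow_succ, Nat.mul_dvd_mul_iff_left (by positivity)]
  omega

theorem thetaN1_not_mem {m n : ℕ} (hmn : m < n) (k : ℕ) :
    ¬ (2 ^ q n ∣ thetaN1 m k ∧ thetaN1 m k ≠ 0) := by
  have hq := q_strictMono hmn
  rintro ⟨hdvd, hne⟩
  unfold thetaN1 at hdvd hne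
  split_ifs at hdvd hne with hk
  · exact not_pow_succ_dvd_pow_mul_odd _ _ ((pow_dvd_pow 2 hq).trans hdvd)
  · exact hk ⟨(pow_dvd_pow 2 hq.le).trans hdvd, hne⟩

theorem stmt12_general (m n : ℕ) (hmn : m < n) (α : ℕ → Bool) :
    gB m (gB n α) = gB m α := by
  funext k
  change (if k = 2 ^ q m then true else gB n α (thetaN1 m k)) =
    (if k = 2 ^ q m then true else α (thetaN1 m k))
  rw [gB_apply_of_not_mem α (thetaN1_not_mem hmn k)]

/-- if `m < n`, `α ∈ N_{t_n 0}`, `α ∈ N_{t_m 0}` and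
`g_n(α) ∈ N_{t_m 0}`, then `g_m(g_n(α)) = g_m(α)`. -/
theorem stmt12 (m n : ℕ) (hmn : m < n) (α : ℕ → Bool)
    (h1 : inN n false α) (h2 : inN m false α) (h3 : inN m false (gB n α)) :
    gB m (gB n α) = gB m α :=
  stmt12_general m n hmn α
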